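/- arXiv:2401.12532 — 2 statements merged into one kernel-verified Lean document; each statement's English description precedes it below -/
import Mathlib

section
/- Let d ≥ 1, σ > 1, η > 0, α ≥ 1, 0 < ε < η, and A = 2√d·σ/(σ²−1). Define g(α) = (1+α)/2·η − ε and R_rob(α) = Φ(−A·g(α) + √((A/σ)²·g(α)² + 2·log σ/(σ²−1))). Then R_rob is strictly monotonically decreasing in α. -/
open Real Set

/-- Standard normal cumulative distribution function. -/
noncomputable def stdNormalCDF (z : ℝ) : ℝ :=
  ∫ t in Set.Iic z, (Real.sqrt (2 * Real.pi))⁻¹ * Real.exp (-t ^ 2 / 2)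

/-!
The robust error is `Φ (f (g α))` with `f x = -A x + √((A/σ)² x² + C)` and `C ≥ 0`.
Since `x ↦ √(b² x² + c)` is `|b|`-Lipschitz (it is the Euclidean norm of `(b x, √c)`) and
`|A/σ| < A`, the linear term wins and `f` is strictly decreasing; `g` is strictly increasing
and `Φ` strictly increasing, so the composite is strictly decreasing.
-/

lemma integrable_stdNormalDensity :
    MeasureTheory.Integrable fun t : ℝ => (√(2 * π))⁻¹ * exp (-t ^ 2 / 2) := by
  have h := (integrable_exp_neg_mul_sq (b := 1 / 2) (by norm_num)).const_mul (√(2 * π))⁻¹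
  refine h.congr (Filter.Eventually.of_forall fun t => ?_)
  simp only
  ring_nf

lemma stdNormalCDF_strictMono : StrictMono stdNormalCDF := by
  intro a b hab
  have hint := integrable_stdNormalDensity
  have hdiff : stdNormalCDF b - stdNormalCDF a
      = ∫ t in a..b, (√(2 * π))⁻¹ * exp (-t ^ 2 / 2) :=
    intervalIntegral.integral_Iic_sub_Iic hint.integrableOn hint.integrableOn
  have hpos : 0 < ∫ t in a..b, (√(2 * π))⁻¹ * exp (-t ^ 2 / 2) :=
    intervalIntegral.intervalIntegral_pos_of_pos_on hint.intervalIntegrable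
      (fun _ _ => by positivity) hab
  linarith

lemma sqrt_sq_add_le_sqrt_sq_add_abs_sub {c : ℝ} (hc : 0 ≤ c) (x y : ℝ) :
    √(x ^ 2 + c) ≤ √(y ^ 2 + c) + |x - y| := by
  have hs : |y| ≤ √(y ^ 2 + c) := by
    rw [← sqrt_sq_eq_abs]
    exact sqrt_le_sqrt (by linarith)
  have hsq : √(y ^ 2 + c) ^ 2 = y ^ 2 + c := sq_sqrt (by positivity)
  have hcross : y * (x - y) ≤ √(y ^ 2 + c) * |x - y| := by
    calc y * (x - y) ≤ |y| * |x - y| := by rw [← abs_mul]; exact le_abs_self _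
      _ ≤ √(y ^ 2 + c) * |x - y| := by gcongr
  rw [sqrt_le_iff]
  refine ⟨by positivity, ?_⟩
  nlinarith [sq_abs (x - y)]

lemma strictAnti_neg_mul_add_sqrt {a b c : ℝ} (hba : |b| < a) (hc : 0 ≤ c) :
    StrictAnti fun x => -a * x + √(b ^ 2 * x ^ 2 + c) := by
  intro x y hxy
  have hlip : √(b ^ 2 * y ^ 2 + c) ≤ √(b ^ 2 * x ^ 2 + c) + |b| * (y - x) := by
    simpa only [← mul_pow, ← mul_sub, abs_mul, abs_of_pos (sub_pos.2 hxy)]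
      using sqrt_sq_add_le_sqrt_sq_add_abs_sub hc (b * y) (b * x)
  have hslope : |b| * (y - x) < a * (y - x) := by gcongr
  linarith

theorem stmt1_general (d : ℕ) (σ η ε : ℝ) (hd : 1 ≤ d) (hσ : 1 < σ) (hη : 0 < η)
    (A : ℝ) (hA : A = 2 * Real.sqrt d * σ / (σ ^ 2 - 1))
    (g Rrob : ℝ → ℝ)
    (hg : ∀ α, g α = (1 + α) / 2 * η - ε)
    (hR : ∀ α, Rrob α = stdNormalCDF (-A * g α +
      Real.sqrt ((A / σ) ^ 2 * (g α) ^ 2 + 2 * Real.log σ / (σ ^ 2 - 1)))) :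
    StrictAntiOn Rrob (Set.Ici (1 : ℝ)) := by
  have hσ0 : 0 < σ := by linarith
  have hσ2 : 0 < σ ^ 2 - 1 := by nlinarith
  have hA0 : 0 < A := by
    have : (0 : ℝ) < d := by exact_mod_cast hd
    rw [hA]; positivity
  have hslope : |A / σ| < A := by
    rw [abs_of_pos (by positivity), div_lt_iff₀ hσ0]
    nlinarith
  have hC : 0 ≤ 2 * log σ / (σ ^ 2 - 1) := by
    have := log_pos hσ
    positivity
  have hg_mono : StrictMono g := fun x y hxy => by
    rw [hg, hg]; gcongr
  have hRrob : Rrob = stdNormalCDF ∘ (fun x => -A * x +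
      √((A / σ) ^ 2 * x ^ 2 + 2 * log σ / (σ ^ 2 - 1))) ∘ g := funext hR
  rw [hRrob]
  exact (stdNormalCDF_strictMono.comp_strictAnti
    ((strictAnti_neg_mul_add_sqrt hslope hC).comp_strictMono hg_mono)).strictAntiOn _

theorem stmt1 (d : ℕ) (σ η ε : ℝ) (hd : 1 ≤ d) (hσ : 1 < σ) (hη : 0 < η)
    (hε0 : 0 < ε) (hεη : ε < η)
    (A : ℝ) (hA : A = 2 * Real.sqrt d * σ / (σ ^ 2 - 1))
    (g Rrob : ℝ → ℝ)
    (hg : ∀ α, g α = (1 + α) / 2 * η - ε)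
    (hR : ∀ α, Rrob α = stdNormalCDF (-A * g α +
      Real.sqrt ((A / σ) ^ 2 * (g α) ^ 2 + 2 * Real.log σ / (σ ^ 2 - 1)))) :
    StrictAntiOn Rrob (Set.Ici (1 : ℝ)) :=
  stmt1_general d σ η ε hd hσ hη A hA g Rrob hg hR
end

section
/- Let σ > 1, d ≥ 1, η > 0, α ≥ 1, and let m = (1+α)/2·η. The function b ↦ Φ(−(√d/σ)·m − b/σ) + Φ(−√d·m + b) (the total standard error of the unit-norm linear classifier with bias b on the translated Gaussian mixture) has a critical point at b* = ((σ²+1)/(σ²−1))·√d·m − σ·√((4/(σ²−1)²)·d·m² + 2·log σ/(σ²−1)). -/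
open Real Set

/-!
A critical point of `b ↦ Φ(p - b/σ) + Φ(q + b)` is a point where the two Gaussian densities
balance, `σ φ(q + b) = φ(p - b/σ)`. Taking logarithms this is `(q + b)² = (p - b/σ)² + 2 log σ`,
a quadratic equation in `b` whose smaller root is the stated `b*`.
-/

open MeasureTheory ProbabilityTheory

lemma stdNormalCDF_eq_integral_gaussianPDFReal (z : ℝ) :
    stdNormalCDF z = ∫ t in Iic z, gaussianPDFReal 0 1 t := by
  simp [stdNormalCDF, gaussianPDFReal]

lemma hasDerivAt_stdNormalCDF (z : ℝ) :
    HasDerivAt stdNormalCDF (gaussianPDFReal 0 1 z) z := by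
  have hint := integrable_gaussianPDFReal 0 1
  have hcont : Continuous (gaussianPDFReal 0 1) := by
    unfold gaussianPDFReal; fun_prop
  have hsplit : stdNormalCDF = fun u ↦
      (∫ t in Iic 0, gaussianPDFReal 0 1 t) + ∫ t in (0 : ℝ)..u, gaussianPDFReal 0 1 t := by
    funext u
    rw [stdNormalCDF_eq_integral_gaussianPDFReal,
      ← intervalIntegral.integral_Iic_sub_Iic hint.integrableOn hint.integrableOn]
    ring
  rw [hsplit]
  exact (intervalIntegral.integral_hasDerivAt_right hint.intervalIntegrable
    (hcont.stronglyMeasurableAtFilter _ _) hcont.continuousAt).const_add _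

lemma hasDerivAt_stdNormalCDF_sub_div_add (p q σ b : ℝ) :
    HasDerivAt (fun b ↦ stdNormalCDF (p - b / σ) + stdNormalCDF (q + b))
      (gaussianPDFReal 0 1 (q + b) - gaussianPDFReal 0 1 (p - b / σ) / σ) b := by
  have hleft := (hasDerivAt_stdNormalCDF (p - b / σ)).comp b
    (((hasDerivAt_id b).div_const σ).const_sub p)
  have hright := (hasDerivAt_stdNormalCDF (q + b)).comp b ((hasDerivAt_id b).const_add q)
  exact (hleft.add hright).congr_deriv (by ring)

lemma mul_gaussianPDFReal_eq_of_sq_eq {σ x y : ℝ} (hσ : 0 < σ)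
    (h : x ^ 2 = y ^ 2 + 2 * log σ) :
    σ * gaussianPDFReal 0 1 x = gaussianPDFReal 0 1 y := by
  have hexp : σ * exp (-x ^ 2 / 2) = exp (-y ^ 2 / 2) := by
    rw [h, show -(y ^ 2 + 2 * log σ) / 2 = -y ^ 2 / 2 - log σ by ring, exp_sub, exp_log hσ]
    field_simp
  simp only [gaussianPDFReal, NNReal.coe_one, mul_one, sub_zero]
  rw [← hexp]
  ring

lemma deriv_stdNormalCDF_sub_div_add_eq_zero {p q σ b : ℝ} (hσ : 0 < σ)
    (h : (q + b) ^ 2 = (p - b / σ) ^ 2 + 2 * log σ) :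
    deriv (fun b ↦ stdNormalCDF (p - b / σ) + stdNormalCDF (q + b)) b = 0 := by
  rw [(hasDerivAt_stdNormalCDF_sub_div_add p q σ b).deriv,
    ← mul_gaussianPDFReal_eq_of_sq_eq hσ h, mul_div_cancel_left₀ _ hσ.ne', sub_self]

lemma sq_sub_eq_sq_add_of_eq_quadratic_root {σ s L b : ℝ} (hσ : 1 < σ) (hL : 0 ≤ L)
    (hb : b = (σ ^ 2 + 1) / (σ ^ 2 - 1) * s -
      σ * √(4 / (σ ^ 2 - 1) ^ 2 * s ^ 2 + 2 * L / (σ ^ 2 - 1))) :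
    (b - s) ^ 2 = ((s + b) / σ) ^ 2 + 2 * L := by
  have hk : 0 < σ ^ 2 - 1 := by nlinarith
  set R := √(4 / (σ ^ 2 - 1) ^ 2 * s ^ 2 + 2 * L / (σ ^ 2 - 1))
  have hR : (σ ^ 2 - 1) ^ 2 * R ^ 2 = 4 * s ^ 2 + 2 * L * (σ ^ 2 - 1) := by
    rw [sq_sqrt (by positivity)]
    field_simp
  have hb' : (σ ^ 2 - 1) * b = (σ ^ 2 + 1) * s - σ * (σ ^ 2 - 1) * R := by
    rw [hb]; field_simp
  field_simp
  apply mul_left_cancel₀ (pow_ne_zero 2 hk.ne')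
  linear_combination ((σ ^ 2 - 1) * ((σ ^ 2 - 1) * b - (σ ^ 2 + 1) * s
    - σ * (σ ^ 2 - 1) * R)) * hb' + (σ ^ 2 * (σ ^ 2 - 1)) * hR

theorem stmt10_general (d : ℕ) (σ m : ℝ) (hσ : 1 < σ)
    (F : ℝ → ℝ)
    (hF : ∀ b, F b = stdNormalCDF (-(Real.sqrt d / σ) * m - b / σ) +
      stdNormalCDF (-Real.sqrt d * m + b))
    (bstar : ℝ)
    (hb : bstar = (σ ^ 2 + 1) / (σ ^ 2 - 1) * Real.sqrt d * m -
      σ * Real.sqrt (4 / (σ ^ 2 - 1) ^ 2 * d * m ^ 2 + 2 * Real.log σ / (σ ^ 2 - 1))) :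
    deriv F bstar = 0 := by
  have hdm : (d : ℝ) * m ^ 2 = (√d * m) ^ 2 := by
    rw [mul_pow, sq_sqrt d.cast_nonneg]
  have hroot := sq_sub_eq_sq_add_of_eq_quadratic_root (s := √d * m) (b := bstar) hσ
    (log_nonneg hσ.le) (by rw [hb, ← hdm]; ring_nf)
  rw [funext hF]
  refine deriv_stdNormalCDF_sub_div_add_eq_zero (zero_lt_one.trans hσ) ?_
  convert hroot using 2 <;> ring

theorem stmt10 (d : ℕ) (σ η α m : ℝ) (hd : 1 ≤ d) (hσ : 1 < σ) (hη : 0 < η)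
    (hα : 1 ≤ α) (hm : m = (1 + α) / 2 * η)
    (F : ℝ → ℝ)
    (hF : ∀ b, F b = stdNormalCDF (-(Real.sqrt d / σ) * m - b / σ) +
      stdNormalCDF (-Real.sqrt d * m + b))
    (bstar : ℝ)
    (hb : bstar = (σ ^ 2 + 1) / (σ ^ 2 - 1) * Real.sqrt d * m -
      σ * Real.sqrt (4 / (σ ^ 2 - 1) ^ 2 * d * m ^ 2 + 2 * Real.log σ / (σ ^ 2 - 1))) :
    deriv F bstar = 0 :=
  stmt10_general d σ m hσ F hF bstar hb
end
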